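/- Fix b > 0, a ∈ ℝ, p > 1, C > 0, and let ψ: ℝ → ℂ satisfy |ψ(t)| ≤ C(1 + t - a - (2b)^{-1})^{-p} for t > a + (2b)^{-1}, ψ(t) = 0 for t ∈ [a - (2b)^{-1}, a + (2b)^{-1}], and |ψ(t)| ≤ C(1 - t + a - (2b)^{-1})^{-p} for t < a - (2b)^{-1}. Then for every t ∈ [a - (2b)^{-1}, a + (2b)^{-1}], ∑_{l∈ℤ} |ψ(t - l b^{-1})| ≤ 2C(1 + (1 + b^{-1})^{-p}(b + p)(p-1)^{-1}). -/

import Mathlib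

/-!
Since `ψ` vanishes on the central interval of length `b⁻¹` and `t` lies in it, the term `l = 0`
vanishes and the `l`-th translate with `|l| = n + 1` lies at distance at least `n b⁻¹` outside
that interval, so it is bounded by `C (1 + n b⁻¹)^(-p)` on either side. It remains to bound
`∑ₙ (1 + n b⁻¹)^(-p)`: keep the terms `n = 0, 1` and compare the rest with
`∫₁^∞ (1 + y b⁻¹)^(-p) dy = b (1 + b⁻¹)^(1-p) / (p - 1)`.
-/

open Finset

lemma tsum_int_le_add_two_mul_tsum {u : ℤ → ℝ} {v : ℕ → ℝ} (hu : ∀ l, 0 ≤ u l) (hv : Summable v)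
    (hpos : ∀ n : ℕ, u (n + 1) ≤ v n) (hneg : ∀ n : ℕ, u (-(n + 1)) ≤ v n) :
    ∑' l, u l ≤ u 0 + 2 * ∑' n, v n := by
  have hsum_pos : Summable fun n : ℕ => u (n + 1) := hv.of_nonneg_of_le (fun _ => hu _) hpos
  have hsum_neg : Summable fun n : ℕ => u (-(n + 1)) := hv.of_nonneg_of_le (fun _ => hu _) hneg
  rw [(hsum_pos.hasSum.of_add_one_of_neg_add_one hsum_neg.hasSum).tsum_eq]
  linarith [hsum_pos.tsum_le_tsum hpos hv, hsum_neg.tsum_le_tsum hneg hv]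

section TailSum

variable {c p : ℝ}

lemma integral_one_add_mul_rpow_neg_le (hc : 0 < c) (hp : 1 < p) {x : ℝ} (hx : 1 ≤ x) :
    ∫ y in (1 : ℝ)..x, (1 + y * c) ^ (-p) ≤ (1 + c) ^ (1 - p) / (c * (p - 1)) := by
  have hpos : ∀ y ∈ Set.uIcc (1 : ℝ) x, 0 < 1 + y * c := by
    intro y hy
    rw [Set.uIcc_of_le hx] at hy
    nlinarith [hy.1]
  have hderiv : ∀ y ∈ Set.uIcc (1 : ℝ) x,
      HasDerivAt (fun y => -(1 + y * c) ^ (1 - p) / (c * (p - 1))) ((1 + y * c) ^ (-p)) y := by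
    intro y hy
    have hrpow := (((hasDerivAt_id y).mul_const c).const_add 1).rpow_const (p := 1 - p)
      (Or.inl (hpos y hy).ne')
    refine (hrpow.neg.div_const (c * (p - 1))).congr_deriv ?_
    have hp1 : p - 1 ≠ 0 := by linarith
    rw [show 1 - p - 1 = -p by ring, id]
    field_simp
    ring
  have hint : IntervalIntegrable (fun y => (1 + y * c) ^ (-p)) MeasureTheory.volume 1 x := by
    refine ContinuousOn.intervalIntegrable fun y hy => ?_
    exact ((continuousAt_const.add (continuousAt_id.mul continuousAt_const)).rpow_const
      (Or.inl (hpos y hy).ne')).continuousWithinAt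
  rw [intervalIntegral.integral_eq_sub_of_hasDerivAt hderiv hint]
  have hend : 0 ≤ (1 + x * c) ^ (1 - p) / (c * (p - 1)) := by
    have := hpos x Set.right_mem_uIcc
    have : 0 < p - 1 := by linarith
    positivity
  rw [one_mul, neg_div, neg_div]
  linarith

lemma sum_range_one_add_mul_rpow_neg_le (hc : 0 < c) (hp : 1 < p) (n : ℕ) :
    ∑ k ∈ range n, (1 + k * c) ^ (-p) ≤
      1 + (1 + c) ^ (-p) + (1 + c) ^ (1 - p) / (c * (p - 1)) := by
  set f : ℕ → ℝ := fun k => (1 + k * c) ^ (-p)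
  have hf : ∀ k, 0 ≤ f k := fun k => by positivity
  have hanti : AntitoneOn (fun y : ℝ => (1 + y * c) ^ (-p)) (Set.Icc 1 (1 + n)) :=
    fun x hx y _ hxy =>
      Real.rpow_le_rpow_of_nonpos (by nlinarith [hx.1]) (by nlinarith) (by linarith)
  have htail : ∑ i ∈ range n, f (i + 2) ≤ (1 + c) ^ (1 - p) / (c * (p - 1)) :=
    calc ∑ i ∈ range n, f (i + 2) = ∑ i ∈ range n, (1 + (1 + ↑(i + 1) : ℝ) * c) ^ (-p) := by
          refine sum_congr rfl fun i _ => ?_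
          simp only [f]
          push_cast
          ring_nf
      _ ≤ ∫ y in (1 : ℝ)..1 + n, (1 + y * c) ^ (-p) := hanti.sum_le_integral
      _ ≤ _ := integral_one_add_mul_rpow_neg_le hc hp (by linarith [n.cast_nonneg (α := ℝ)])
  calc ∑ k ∈ range n, f k ≤ ∑ k ∈ range (n + 2), f k :=
        sum_le_sum_of_subset_of_nonneg (range_mono (by omega)) fun k _ _ => hf k
    _ = ∑ i ∈ range n, f (i + 2) + f 1 + f 0 := by rw [sum_range_succ', sum_range_succ']
    _ ≤ _ := by
      rw [show f 1 = (1 + c) ^ (-p) by simp [f], show f 0 = 1 by simp [f]]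
      linarith

lemma summable_one_add_mul_rpow_neg (hc : 0 < c) (hp : 1 < p) :
    Summable fun k : ℕ => (1 + k * c) ^ (-p) :=
  summable_of_sum_range_le (fun k => by positivity) (sum_range_one_add_mul_rpow_neg_le hc hp)

end TailSum

lemma tsum_one_add_mul_inv_rpow_neg_le {b p : ℝ} (hb : 0 < b) (hp : 1 < p) :
    ∑' k : ℕ, (1 + k * b⁻¹) ^ (-p) ≤ 1 + (1 + b⁻¹) ^ (-p) * (b + p) * (p - 1)⁻¹ := by
  refine Real.tsum_le_of_sum_range_le (fun k => by positivity) fun n => ?_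
  convert sum_range_one_add_mul_rpow_neg_le (inv_pos.2 hb) hp n using 1
  have hp1 : p - 1 ≠ 0 := by linarith
  rw [sub_eq_add_neg 1 p, Real.rpow_add (by positivity), Real.rpow_one]
  field_simp
  ring

section Decay

variable {E : Type*} [SeminormedAddGroup E] {ψ : ℝ → E} {a w p C : ℝ}

lemma norm_le_of_le_sub (hp : 0 ≤ p) (hC : 0 ≤ C) (hzero : ψ (a - w) = 0)
    (hleft : ∀ t, t < a - w → ‖ψ t‖ ≤ C * (1 - t + a - w) ^ (-p)) {d x : ℝ} (hd : 0 ≤ d)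
    (hx : x ≤ a - w - d) : ‖ψ x‖ ≤ C * (1 + d) ^ (-p) := by
  rcases (hx.trans (by linarith : a - w - d ≤ a - w)).lt_or_eq with hlt | rfl
  · exact (hleft x hlt).trans <| mul_le_mul_of_nonneg_left
      (Real.rpow_le_rpow_of_nonpos (by linarith) (by linarith) (by linarith)) hC
  · rw [hzero, norm_zero]
    exact mul_nonneg hC (Real.rpow_nonneg (by linarith) _)

lemma norm_le_of_add_le (hp : 0 ≤ p) (hC : 0 ≤ C) (hzero : ψ (a + w) = 0)
    (hright : ∀ t, a + w < t → ‖ψ t‖ ≤ C * (1 + t - a - w) ^ (-p)) {d x : ℝ} (hd : 0 ≤ d)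
    (hx : a + w + d ≤ x) : ‖ψ x‖ ≤ C * (1 + d) ^ (-p) := by
  have := norm_le_of_le_sub (ψ := fun t => ψ (-t)) (a := -a) (w := w) hp hC
    (by simpa [add_comm] using hzero)
    (fun t ht => by convert hright (-t) (by linarith) using 3; ring)
    hd (x := -x) (by linarith)
  simpa using this

end Decay

theorem periodized_tail_sum_bound (b a p C : ℝ) (hb : 0 < b) (hp : 1 < p) (hC : 0 < C)
    (ψ : ℝ → ℂ)
    (hright : ∀ t : ℝ, a + (2 * b)⁻¹ < t → ‖ψ t‖ ≤ C * (1 + t - a - (2 * b)⁻¹) ^ (-p))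
    (hmid : ∀ t ∈ Set.Icc (a - (2 * b)⁻¹) (a + (2 * b)⁻¹), ψ t = 0)
    (hleft : ∀ t : ℝ, t < a - (2 * b)⁻¹ → ‖ψ t‖ ≤ C * (1 - t + a - (2 * b)⁻¹) ^ (-p)) :
    ∀ t ∈ Set.Icc (a - (2 * b)⁻¹) (a + (2 * b)⁻¹),
      ∑' l : ℤ, ‖ψ (t - l * b⁻¹)‖ ≤
        2 * C * (1 + (1 + b⁻¹) ^ (-p) * (b + p) * (p - 1)⁻¹) := by
  intro t ht
  have hstep : b⁻¹ = (2 * b)⁻¹ + (2 * b)⁻¹ := by rw [mul_inv]; ring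
  have hw : 0 ≤ (2 * b)⁻¹ := by positivity
  have hp0 : 0 ≤ p := by linarith
  calc ∑' l : ℤ, ‖ψ (t - l * b⁻¹)‖
      ≤ ‖ψ (t - (0 : ℤ) * b⁻¹)‖ + 2 * ∑' n : ℕ, C * (1 + n * b⁻¹) ^ (-p) := by
        refine tsum_int_le_add_two_mul_tsum (fun _ => norm_nonneg _)
          ((summable_one_add_mul_rpow_neg (inv_pos.2 hb) hp).mul_left C) (fun n => ?_) (fun n => ?_)
        · refine norm_le_of_le_sub hp0 hC.le (hmid _ ⟨le_rfl, by linarith⟩) hleft (by positivity) ?_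
          push_cast
          linarith [ht.2]
        · refine norm_le_of_add_le hp0 hC.le (hmid _ ⟨by linarith, le_rfl⟩) hright
            (by positivity) ?_
          push_cast
          linarith [ht.1]
    _ = 2 * C * ∑' n : ℕ, (1 + n * b⁻¹) ^ (-p) := by
        rw [Int.cast_zero, zero_mul, sub_zero, hmid t ht, norm_zero, tsum_mul_left]
        ring
    _ ≤ _ := mul_le_mul_of_nonneg_left (tsum_one_add_mul_inv_rpow_neg_le hb hp) (by positivity)
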